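/- arXiv:1502.06155 — 2 statements merged into one kernel-verified Lean document; each statement's English description precedes it below -/
import Mathlib

section
/- Let ℛ₁,…,ℛₙ be coherent risk measures on L² with risk envelopes 𝒬₁,…,𝒬ₙ, and let ℛ̃₃ be the lower semicontinuous hull of their inf-convolution. Then ℛ̃₃ is a coherent risk measure on L² with risk envelope ⋂_{i=1}^n 𝒬ᵢ if and only if ⋂_{i=1}^n 𝒬ᵢ ≠ ∅. -/
open MeasureTheory Filter Topology

noncomputable section

variable {Ω : Type*} [MeasurableSpace Ω] (μ : Measure Ω) [IsProbabilityMeasure μ]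

/-- The space `L²(Ω, Σ, P₀; ℝ)`. -/
abbrev L2 := Lp ℝ 2 μ

/-- Expectation of an `L²` random variable. -/
def expect (X : L2 μ) : ℝ := ∫ ω, X ω ∂μ

/-- `E[X Q]`. -/
def pairing (X Q : L2 μ) : ℝ := ∫ ω, X ω * Q ω ∂μ

/-- The set of densities `𝒫 = {Q ∈ L² : Q ≥ 0 a.s., E[Q] = 1}`. -/
def densities : Set (L2 μ) := {Q | (0 : Ω → ℝ) ≤ᵐ[μ] ⇑Q ∧ ∫ ω, Q ω ∂μ = 1}

/-- The constant random variable as an element of `L²`. -/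
def constL2 (c : ℝ) : L2 μ := (memLp_const c).toLp (fun _ => c)

/-- A coherent risk measure (values in `(-∞, +∞]`, i.e. never `⊥`), axioms (A1)–(A5). -/
structure IsCoherent (ℛ : L2 μ → EReal) : Prop where
  nonbot : ∀ X : L2 μ, ℛ X ≠ ⊥
  const : ∀ C : ℝ, ℛ (constL2 μ C) = (C : EReal)
  convex : ∀ X X' : L2 μ, ∀ l : ℝ, 0 ≤ l → l ≤ 1 →
    ℛ ((1 - l) • X + l • X') ≤ ((1 - l : ℝ) : EReal) * ℛ X + (l : EReal) * ℛ X'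
  mono : ∀ X X' : L2 μ, (⇑X ≤ᵐ[μ] ⇑X') → ℛ X ≤ ℛ X'
  closed : ∀ (Xk : ℕ → L2 μ) (X : L2 μ),
    Tendsto (fun k => ‖Xk k - X‖) atTop (𝓝 0) → (∀ k, ℛ (Xk k) ≤ 0) → ℛ X ≤ 0
  posHom : ∀ (X : L2 μ) (l : ℝ), 0 < l → ℛ (l • X) = (l : EReal) * ℛ X

/-- A risk envelope: a nonempty closed convex subset of `𝒫`. -/
def IsRiskEnvelope (𝒬 : Set (L2 μ)) : Prop :=
  𝒬.Nonempty ∧ IsClosed 𝒬 ∧ Convex ℝ 𝒬 ∧ 𝒬 ⊆ densities μ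

/-- `ℛ` has risk envelope `𝒬`: `ℛ(X) = sup_{Q ∈ 𝒬} E[XQ]`. -/
def HasEnvelope (ℛ : L2 μ → EReal) (𝒬 : Set (L2 μ)) : Prop :=
  ∀ X : L2 μ, ℛ X = ⨆ Q ∈ 𝒬, ((pairing μ X Q : ℝ) : EReal)

/-- Inf-convolution of finitely many functionals. -/
def infConv {n : ℕ} (ℛ : Fin n → L2 μ → EReal) (X : L2 μ) : EReal :=
  ⨅ (Y : Fin n → L2 μ) (_ : ∑ i, Y i = X), ∑ i, ℛ i (Y i)

/-- The lower semicontinuous hull (largest lsc minorant) of an `EReal`-valued function. -/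
def lscHull {α : Type*} [TopologicalSpace α] (f : α → EReal) (x : α) : EReal :=
  ⨆ g ∈ {g : α → EReal | LowerSemicontinuous g ∧ ∀ y, g y ≤ f y}, g x

/-!
A risk measure with envelope `𝒬` is the support function `σ_𝒬 X = sup_{Q ∈ 𝒬} ⟪X, Q⟫`. If the
`𝒬ᵢ` have no common point, `σ_∅ = ⊥`, which no coherent risk measure is. If `Q₀` lies in every
`𝒬ᵢ`, then `σ_{⋂ 𝒬ᵢ}` is a lower semicontinuous minorant of the inf-convolution, and it is the
largest one: a point `(X, c)` with `σ_{⋂ 𝒬ᵢ} X ≤ c` lies in the closure of `∑ᵢ epi σ_{𝒬ᵢ}`, since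
otherwise a hyperplane separates them; tilted by `Q₀` it becomes nonvertical, and a scaling argument
puts its slope `R` in every `𝒬ᵢ`, contradicting `⟪X, R⟫ ≤ c`. Finally, the support function of a
nonempty set of densities satisfies (A1)–(A5).
-/

open scoped RealInnerProductSpace

theorem EReal.coe_finset_sum {ι : Type*} (s : Finset ι) (f : ι → ℝ) :
    ((∑ i ∈ s, f i : ℝ) : EReal) = ∑ i ∈ s, (f i : EReal) :=
  map_sum (⟨⟨Real.toEReal, EReal.coe_zero⟩, EReal.coe_add⟩ : ℝ →+ EReal) f s

section SupportFunction

variable {E : Type*} [NormedAddCommGroup E] [InnerProductSpace ℝ E] {C : Set E}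

def supportFun (C : Set E) (X : E) : EReal := ⨆ Q ∈ C, ((⟪X, Q⟫ : ℝ) : EReal)

theorem inner_le_supportFun {Q : E} (hQ : Q ∈ C) (X : E) :
    ((⟪X, Q⟫ : ℝ) : EReal) ≤ supportFun C X :=
  le_iSup₂ (f := fun Q _ => ((⟪X, Q⟫ : ℝ) : EReal)) Q hQ

theorem supportFun_le_iff {X : E} {t : EReal} :
    supportFun C X ≤ t ↔ ∀ Q ∈ C, ((⟪X, Q⟫ : ℝ) : EReal) ≤ t :=
  iSup₂_le_iff

@[simp]
theorem supportFun_empty (X : E) : supportFun ∅ X = ⊥ := by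
  simp [supportFun]

theorem supportFun_ne_bot (hC : C.Nonempty) (X : E) : supportFun C X ≠ ⊥ := by
  obtain ⟨Q, hQ⟩ := hC
  exact ne_bot_of_le_ne_bot (EReal.coe_ne_bot _) (inner_le_supportFun hQ X)

theorem supportFun_zero_nonpos : supportFun C 0 ≤ 0 :=
  supportFun_le_iff.2 fun Q _ => by simp

theorem supportFun_smul_add_smul_le {a b : ℝ} (ha : 0 ≤ a) (hb : 0 ≤ b) (Y Z : E) :
    supportFun C (a • Y + b • Z) ≤ (a : EReal) * supportFun C Y + (b : EReal) * supportFun C Z := by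
  refine supportFun_le_iff.2 fun Q hQ => ?_
  rw [inner_add_left, real_inner_smul_left, real_inner_smul_left, EReal.coe_add, EReal.coe_mul,
    EReal.coe_mul]
  gcongr
  · exact inner_le_supportFun hQ Y
  · exact inner_le_supportFun hQ Z

theorem supportFun_smul_le {l : ℝ} (hl : 0 ≤ l) (X : E) :
    supportFun C (l • X) ≤ (l : EReal) * supportFun C X := by
  refine supportFun_le_iff.2 fun Q hQ => ?_
  rw [real_inner_smul_left, EReal.coe_mul]
  gcongr
  exact inner_le_supportFun hQ X

theorem supportFun_smul {l : ℝ} (hl : 0 < l) (X : E) :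
    supportFun C (l • X) = (l : EReal) * supportFun C X := by
  refine le_antisymm (supportFun_smul_le hl.le X) ?_
  calc (l : EReal) * supportFun C X
      = (l : EReal) * supportFun C (l⁻¹ • l • X) := by rw [inv_smul_smul₀ hl.ne']
    _ ≤ (l : EReal) * ((l⁻¹ : ℝ) * supportFun C (l • X)) := by
        gcongr
        exact supportFun_smul_le (inv_nonneg.2 hl.le) _
    _ = supportFun C (l • X) := by
        rw [← mul_assoc, ← EReal.coe_mul, mul_inv_cancel₀ hl.ne', EReal.coe_one, one_mul]

theorem lowerSemicontinuous_supportFun : LowerSemicontinuous (supportFun C) :=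
  lowerSemicontinuous_biSup fun _ _ =>
    (continuous_coe_real_ereal.comp (continuous_id.inner continuous_const)).lowerSemicontinuous

theorem supportFun_iInter_sum_le {ι : Type*} [Fintype ι] (C : ι → Set E) (Y : ι → E) :
    supportFun (⋂ i, C i) (∑ i, Y i) ≤ ∑ i, supportFun (C i) (Y i) := by
  refine supportFun_le_iff.2 fun Q hQ => ?_
  rw [sum_inner, EReal.coe_finset_sum]
  exact Finset.sum_le_sum fun i _ => inner_le_supportFun (Set.mem_iInter.1 hQ i) (Y i)

end SupportFunction

section Separation

variable {E : Type*} [NormedAddCommGroup E] [InnerProductSpace ℝ E]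

theorem mem_of_forall_supportFun_le [CompleteSpace E] {C : Set E} (hCc : IsClosed C)
    (hCv : Convex ℝ C) {R : E} {β : ℝ}
    (h : ∀ (W : E) (r : ℝ), supportFun C W ≤ r → ⟪W, R⟫ ≤ r + β) : R ∈ C := by
  by_contra hR
  obtain ⟨f, v, hfC, hfR⟩ := geometric_hahn_banach_closed_point hCv hCc hR
  set W := (InnerProductSpace.toDual ℝ E).symm f
  have hW : ∀ x, ⟪W, x⟫ = f x := fun x => InnerProductSpace.toDual_symm_apply
  have hscaled : ∀ l : ℝ, 0 < l → l * (f R - v) ≤ β := by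
    intro l hl
    have hσ : supportFun C (l • W) ≤ ((l * v : ℝ) : EReal) := supportFun_le_iff.2 fun Q hQ => by
      rw [real_inner_smul_left, hW, EReal.coe_le_coe_iff]
      exact mul_le_mul_of_nonneg_left (hfC Q hQ).le hl.le
    have := h _ _ hσ
    rw [real_inner_smul_left, hW] at this
    linarith
  have hgap : 0 < f R - v := sub_pos.2 hfR
  have := hscaled ((|β| + 1) / (f R - v)) (by positivity)
  rw [div_mul_cancel₀ _ hgap.ne'] at this
  linarith [le_abs_self β]

theorem exists_inner_sub_mul_lt_of_notMem_closure [CompleteSpace E] {S : Set (E × ℝ)}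
    (hS : Convex ℝ S) {x : E × ℝ} (hx : x ∉ closure S) :
    ∃ (P : E) (a u : ℝ), (∀ p ∈ S, ⟪p.1, P⟫ - a * p.2 < u) ∧ u < ⟪x.1, P⟫ - a * x.2 := by
  obtain ⟨φ, u, hφS, hφx⟩ := geometric_hahn_banach_closed_point hS.closure isClosed_closure hx
  set P := (InnerProductSpace.toDual ℝ E).symm (φ.comp (ContinuousLinearMap.inl ℝ E ℝ))
  have hφ : ∀ p : E × ℝ, φ p = ⟪p.1, P⟫ - -φ (0, 1) * p.2 := fun p => by
    have hp : p = (p.1, 0) + p.2 • ((0 : E), (1 : ℝ)) := by simp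
    rw [real_inner_comm, InnerProductSpace.toDual_symm_apply, hp, map_add, map_smul]
    simp [mul_comm]
  exact ⟨P, -φ (0, 1), u, fun p hp => hφ p ▸ hφS p (subset_closure hp), hφ x ▸ hφx⟩

/-- A possibly vertical separating hyperplane, tilted towards the graph of `⟪·, Q₀⟫` below `S`,
becomes a nonvertical one: `R = (a + ε)⁻¹ • (P + ε • Q₀)` for small `ε > 0`. -/
theorem exists_nonvertical_separation {S : Set (E × ℝ)} {Q₀ P X : E} {a u c : ℝ} (ha : 0 ≤ a)
    (hQ₀ : ∀ p ∈ S, ⟪p.1, Q₀⟫ ≤ p.2) (hS : ∀ p ∈ S, ⟪p.1, P⟫ - a * p.2 < u)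
    (hX : u < ⟪X, P⟫ - a * c) :
    ∃ (R : E) (β : ℝ), (∀ p ∈ S, ⟪p.1, R⟫ ≤ p.2 + β) ∧ c + β < ⟪X, R⟫ := by
  obtain ⟨ε, hε, hεX⟩ := exists_pos_mul_lt (sub_pos.2 hX) (c - ⟪X, Q₀⟫)
  have hA : 0 < a + ε := by positivity
  refine ⟨(a + ε)⁻¹ • (P + ε • Q₀), u / (a + ε), fun p hp => ?_, ?_⟩
  · have hεp : ε * ⟪p.1, Q₀⟫ ≤ ε * p.2 := mul_le_mul_of_nonneg_left (hQ₀ p hp) hε.le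
    rw [real_inner_smul_right, inner_add_right, real_inner_smul_right, inv_mul_le_iff₀ hA,
      mul_add, mul_div_cancel₀ _ hA.ne']
    linarith [hS p hp]
  · rw [real_inner_smul_right, inner_add_right, real_inner_smul_right, lt_inv_mul_iff₀ hA,
      mul_add, mul_div_cancel₀ _ hA.ne']
    linarith

end Separation

section EpigraphSum

variable {E : Type*} [NormedAddCommGroup E] [InnerProductSpace ℝ E]
  {ι : Type*} [Fintype ι] {C : ι → Set E}

/-- The sum `∑ᵢ epi σ_{Cᵢ}` of epigraphs: it lies in the epigraph of the inf-convolution of the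
`σ_{Cᵢ}` and, unlike that epigraph, is visibly convex. -/
def epiSum (C : ι → Set E) : Set (E × ℝ) :=
  {p | ∃ (Y : ι → E) (t : ι → ℝ),
    ∑ i, Y i = p.1 ∧ ∑ i, t i ≤ p.2 ∧ ∀ i, supportFun (C i) (Y i) ≤ t i}

theorem convex_epiSum : Convex ℝ (epiSum C) := by
  rintro p ⟨Y, t, hY, ht, hYt⟩ q ⟨Z, s, hZ, hs, hZs⟩ a b ha hb -
  refine ⟨a • Y + b • Z, a • t + b • s, ?_, ?_, fun i => ?_⟩
  · simp [Finset.sum_add_distrib, ← Finset.smul_sum, hY, hZ]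
  · simp only [Pi.add_apply, Pi.smul_apply, smul_eq_mul, Finset.sum_add_distrib, ← Finset.mul_sum,
      Prod.snd_add, Prod.smul_snd]
    gcongr
  · calc supportFun (C i) (a • Y i + b • Z i)
        ≤ (a : EReal) * supportFun (C i) (Y i) + (b : EReal) * supportFun (C i) (Z i) :=
          supportFun_smul_add_smul_le ha hb _ _
      _ ≤ (a : EReal) * (t i : EReal) + (b : EReal) * (s i : EReal) := by
          gcongr
          exacts [hYt i, hZs i]
      _ = ((a • t + b • s) i : ℝ) := by simp [EReal.coe_add, EReal.coe_mul]

theorem mk_zero_mem_epiSum {m : ℝ} (hm : 0 ≤ m) : ((0 : E), m) ∈ epiSum C :=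
  ⟨0, 0, by simp, by simpa using hm, fun _ => by simpa using supportFun_zero_nonpos⟩

theorem mk_mem_epiSum_of_supportFun_le (i : ι) {W : E} {r : ℝ}
    (h : supportFun (C i) W ≤ r) : (W, r) ∈ epiSum C := by
  classical
  refine ⟨Pi.single i W, Pi.single i r, by simp, by simp, fun j => ?_⟩
  rcases eq_or_ne j i with rfl | hj
  · simpa using h
  · simpa [hj] using supportFun_zero_nonpos

theorem inner_le_of_mem_epiSum {Q : E} (hQ : ∀ i, Q ∈ C i) {p : E × ℝ} (hp : p ∈ epiSum C) :
    ⟪p.1, Q⟫ ≤ p.2 := by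
  obtain ⟨Y, t, hY, ht, hYt⟩ := hp
  rw [← hY, sum_inner]
  exact (Finset.sum_le_sum fun i _ =>
    EReal.coe_le_coe_iff.1 ((inner_le_supportFun (hQ i) (Y i)).trans (hYt i))).trans ht

theorem epiSum_subset_epigraph_infConv :
    epiSum C ⊆ {p | ⨅ (Y : ι → E) (_ : ∑ i, Y i = p.1), ∑ i, supportFun (C i) (Y i) ≤ p.2} := by
  rintro p ⟨Y, t, hY, ht, hYt⟩
  calc ⨅ (Y : ι → E) (_ : ∑ i, Y i = p.1), ∑ i, supportFun (C i) (Y i)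
      ≤ ∑ i, supportFun (C i) (Y i) := iInf₂_le Y hY
    _ ≤ ∑ i, (t i : EReal) := Finset.sum_le_sum fun i _ => hYt i
    _ ≤ p.2 := by rw [← EReal.coe_finset_sum]; exact EReal.coe_le_coe_iff.2 ht

theorem mem_closure_epiSum [CompleteSpace E] (hCc : ∀ i, IsClosed (C i))
    (hCv : ∀ i, Convex ℝ (C i)) {Q₀ : E} (hQ₀ : ∀ i, Q₀ ∈ C i) {X : E} {c : ℝ}
    (hX : supportFun (⋂ i, C i) X ≤ c) : (X, c) ∈ closure (epiSum C) := by
  by_contra hXS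
  obtain ⟨P, a, u, hS, hXu⟩ := exists_inner_sub_mul_lt_of_notMem_closure convex_epiSum hXS
  have hu : 0 < u := by simpa using hS _ (mk_zero_mem_epiSum le_rfl)
  have ha : 0 ≤ a := by
    by_contra! ha
    have hm := hS _ (mk_zero_mem_epiSum (C := C) (div_nonneg hu.le (neg_nonneg.2 ha.le)))
    have : a * (u / -a) = -u := by field_simp [ha.ne]
    simp only [inner_zero_left, this] at hm
    linarith
  obtain ⟨R, β, hRS, hRX⟩ :=
    exists_nonvertical_separation ha (fun _ => inner_le_of_mem_epiSum hQ₀) hS hXu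
  have hβ : 0 ≤ β := by simpa using hRS _ (mk_zero_mem_epiSum le_rfl)
  have hR : R ∈ ⋂ i, C i := Set.mem_iInter.2 fun i =>
    mem_of_forall_supportFun_le (hCc i) (hCv i) fun _ _ h =>
      hRS _ (mk_mem_epiSum_of_supportFun_le i h)
  have := EReal.coe_le_coe_iff.1 ((inner_le_supportFun hR X).trans hX)
  linarith

end EpigraphSum

theorem lscHull_eq_of_le_of_mem_closure {α : Type*} [TopologicalSpace α] {f g : α → EReal}
    (hg : LowerSemicontinuous g) (hgf : g ≤ f)
    (hcl : ∀ x (c : ℝ), g x ≤ c → (x, c) ∈ closure {p : α × ℝ | f p.1 ≤ p.2}) :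
    lscHull f = g := by
  funext x
  refine le_antisymm (iSup₂_le fun h ⟨hh, hhf⟩ => ?_)
    (le_iSup₂ (f := fun g' (_ : g' ∈ {g' : α → EReal | LowerSemicontinuous g' ∧ ∀ y, g' y ≤ f y})
      => g' x) g ⟨hg, hgf⟩)
  by_contra! hlt
  obtain ⟨c, hgc, hch⟩ := EReal.exists_between_coe_real hlt
  have hclosed : IsClosed {p : α × ℝ | h p.1 ≤ p.2} :=
    hh.isClosed_epigraph.preimage
      (continuous_fst.prodMk (continuous_coe_real_ereal.comp continuous_snd))
  have hmem := hclosed.closure_subset_iff.2 (fun p hp => (hhf p.1).trans hp) (hcl x c hgc.le)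
  exact hmem.not_gt hch

theorem lscHull_infConv_supportFun {E : Type*} [NormedAddCommGroup E] [InnerProductSpace ℝ E]
    [CompleteSpace E] {ι : Type*} [Fintype ι] {C : ι → Set E} (hCc : ∀ i, IsClosed (C i))
    (hCv : ∀ i, Convex ℝ (C i)) (hC : (⋂ i, C i).Nonempty) :
    lscHull (fun X => ⨅ (Y : ι → E) (_ : ∑ i, Y i = X), ∑ i, supportFun (C i) (Y i)) =
      supportFun (⋂ i, C i) := by
  obtain ⟨Q₀, hQ₀⟩ := hC
  refine lscHull_eq_of_le_of_mem_closure lowerSemicontinuous_supportFun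
    (fun X => le_iInf₂ fun Y hY => hY ▸ supportFun_iInter_sum_le C Y) fun X c hX => ?_
  exact closure_mono epiSum_subset_epigraph_infConv
    (mem_closure_epiSum hCc hCv (Set.mem_iInter.1 hQ₀) hX)

section RiskMeasure

variable {α : Type*} [MeasurableSpace α] {ν : Measure α}

theorem pairing_eq_inner (X Q : L2 ν) : pairing ν X Q = ⟪X, Q⟫ := by
  rw [pairing, L2.inner_def]
  simp [mul_comm]

theorem hasEnvelope_iff {ℛ : L2 ν → EReal} {𝒬 : Set (L2 ν)} :
    HasEnvelope ν ℛ 𝒬 ↔ ℛ = supportFun 𝒬 := by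
  simp only [HasEnvelope, funext_iff, supportFun, pairing_eq_inner]

theorem inner_constL2 [IsProbabilityMeasure ν] {Q : L2 ν} (hQ : ∫ ω, Q ω ∂ν = 1) (c : ℝ) :
    ⟪constL2 ν c, Q⟫ = c := by
  rw [← pairing_eq_inner, pairing]
  calc ∫ ω, constL2 ν c ω * Q ω ∂ν = ∫ ω, c * Q ω ∂ν :=
        integral_congr_ae <| by
          filter_upwards [MemLp.coeFn_toLp (memLp_const (μ := ν) (p := 2) c)] with ω hω
          rw [constL2, hω]
    _ = c := by rw [integral_const_mul, hQ, mul_one]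

theorem inner_le_inner_of_ae_le {X X' Q : L2 ν} (hQ : 0 ≤ᵐ[ν] ⇑Q) (h : ⇑X ≤ᵐ[ν] ⇑X') :
    ⟪X, Q⟫ ≤ ⟪X', Q⟫ := by
  rw [L2.inner_def, L2.inner_def]
  refine integral_mono_ae (L2.integrable_inner X Q) (L2.integrable_inner X' Q) ?_
  filter_upwards [h, hQ] with ω h1 h2
  simpa [mul_comm] using mul_le_mul_of_nonneg_right h1 h2

theorem isCoherent_supportFun [IsProbabilityMeasure ν] {S : Set (L2 ν)} (hS : S.Nonempty)
    (hSd : S ⊆ densities ν) :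
    IsCoherent ν (supportFun S) where
  nonbot := supportFun_ne_bot hS
  const c := by
    obtain ⟨Q₀, hQ₀⟩ := hS
    refine le_antisymm (supportFun_le_iff.2 fun Q hQ => by rw [inner_constL2 (hSd hQ).2]) ?_
    simpa only [inner_constL2 (hSd hQ₀).2] using inner_le_supportFun hQ₀ (constL2 ν c)
  convex X X' l hl0 hl1 := supportFun_smul_add_smul_le (sub_nonneg.2 hl1) hl0 X X'
  mono X X' h := supportFun_le_iff.2 fun Q hQ =>
    (EReal.coe_le_coe_iff.2 (inner_le_inner_of_ae_le (hSd hQ).1 h)).trans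
      (inner_le_supportFun hQ X')
  closed Xk X hk h0 := (lowerSemicontinuous_supportFun.isClosed_preimage 0).mem_of_tendsto
    (tendsto_iff_norm_sub_tendsto_zero.2 hk) (Eventually.of_forall h0)
  posHom X l hl := supportFun_smul hl X

end RiskMeasure

theorem stmt_4 {n : ℕ} (hn : 0 < n) (ℛ : Fin n → L2 μ → EReal) (𝒬 : Fin n → Set (L2 μ))
    (hRE : ∀ i, IsRiskEnvelope μ (𝒬 i))
    (henv : ∀ i, HasEnvelope μ (ℛ i) (𝒬 i)) :
    (IsCoherent μ (lscHull (infConv μ ℛ)) ∧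
      HasEnvelope μ (lscHull (infConv μ ℛ)) (⋂ i, 𝒬 i)) ↔ (⋂ i, 𝒬 i).Nonempty := by
  simp only [hasEnvelope_iff] at henv ⊢
  obtain rfl : ℛ = fun i => supportFun (𝒬 i) := funext henv
  constructor
  · rintro ⟨hcoh, hhull⟩
    by_contra hempty
    rw [Set.not_nonempty_iff_eq_empty] at hempty
    exact hcoh.nonbot 0 (by rw [hhull, hempty, supportFun_empty])
  · intro hne
    have hhull : lscHull (infConv μ fun i => supportFun (𝒬 i)) = supportFun (⋂ i, 𝒬 i) :=
      lscHull_infConv_supportFun (fun i => (hRE i).2.1) (fun i => (hRE i).2.2.1) hne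
    have hdens : (⋂ i, 𝒬 i) ⊆ densities μ :=
      (Set.iInter_subset 𝒬 ⟨0, hn⟩).trans (hRE ⟨0, hn⟩).2.2.2
    exact ⟨hhull ▸ isCoherent_supportFun hne hdens, hhull⟩
end
end

section
/- Fix 0 ≤ λ ≤ 1. For every X ∈ L², sup{ E[XQ] : Q ∈ L², Q ≥ 0 a.s., E[Q] = 1, ‖Q − ess inf Q‖₂ ≤ λ } = E[X] + λ‖(X − E[X])₊‖₂; moreover the set 𝒬 := {Q ∈ 𝒫 : ‖Q − ess inf Q‖₂ ≤ λ} is nonempty, convex and closed in L², so 𝒬 is the risk envelope of the mean-deviation risk measure ℛ(X) = E[X] + λ‖(X − E[X])₊‖₂. -/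
open MeasureTheory Filter Topology

noncomputable section

variable {Ω : Type*} [MeasurableSpace Ω] (μ : Measure Ω) [IsProbabilityMeasure μ]

/-- The mean-deviation risk measure `ℛ(X) = E[X] + λ‖(X − E[X])₊‖₂`. -/
def meanDev (l : ℝ) (X : L2 μ) : ℝ :=
  (∫ ω, X ω ∂μ) + l * Real.sqrt (∫ ω, (max (X ω - ∫ ω', X ω' ∂μ) 0) ^ 2 ∂μ)

/-- The essential infimum `sup{a ∈ ℝ : a ≤ Q a.s.}`. -/
def essInfR (Q : L2 μ) : ℝ := sSup {a : ℝ | ∀ᵐ ω ∂μ, a ≤ Q ω}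

/-- The candidate risk envelope `{Q ∈ 𝒫 : ‖Q − ess inf Q‖₂ ≤ λ}` for the mean-deviation
risk measure. -/
def meanDevEnvelope (l : ℝ) : Set (L2 μ) :=
  {Q ∈ densities μ | Real.sqrt (∫ ω, (Q ω - essInfR μ Q) ^ 2 ∂μ) ≤ l}

/-!
With `m = E[X]`, `Y = (X - m)₊` and any a.s. lower bound `c` of a density `Q`,
`E[XQ] - m = E[(X - m)(Q - c)] ≤ E[Y(Q - c)] ≤ ‖Y‖₂ ‖Q - c‖₂` by Cauchy–Schwarz, as `Q - c ≥ 0`.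
Equality holds for `Q = c + rY` with `r = λ / ‖Y‖₂` and `c = 1 - r E[Y]`, and `c ≥ 1 - λ ≥ 0`
because `E[Y] ≤ ‖Y‖₂`.

As `‖Q - c‖₂` only decreases when `c` increases to `ess inf Q`, the envelope consists of the
densities with some lower bound `c ∈ [0, 1]` such that `‖Q - c‖₂ ≤ λ`. In this form it is
convex, and closed as the projection of a closed set along the compact factor `[0, 1]`.
-/

section
variable {α : Type*} [MeasurableSpace α] {ν : Measure α}

theorem MeasureTheory.L2.norm_eq_sqrt_integral_sq (R : Lp ℝ 2 ν) :
    ‖R‖ = √(∫ a, R a ^ 2 ∂ν) := by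
  rw [← Real.sqrt_sq (norm_nonneg R), ← real_inner_self_eq_norm_sq, L2.inner_def]
  simp [sq]

theorem MeasureTheory.MemLp.norm_toLp_eq_sqrt_integral_sq {f : α → ℝ} (hf : MemLp f 2 ν) :
    ‖hf.toLp f‖ = √(∫ a, f a ^ 2 ∂ν) := by
  rw [L2.norm_eq_sqrt_integral_sq]
  congr 1
  exact integral_congr_ae (hf.coeFn_toLp.fun_comp (· ^ 2))

theorem MeasureTheory.MemLp.integral_mul_le_sqrt_mul_sqrt {f g : α → ℝ} (hf : MemLp f 2 ν)
    (hg : MemLp g 2 ν) :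
    ∫ a, f a * g a ∂ν ≤ √(∫ a, f a ^ 2 ∂ν) * √(∫ a, g a ^ 2 ∂ν) := by
  have hinner : ∫ a, f a * g a ∂ν = inner ℝ (hf.toLp f) (hg.toLp g) := by
    rw [L2.inner_def]
    refine integral_congr_ae ?_
    filter_upwards [hf.coeFn_toLp, hg.coeFn_toLp] with a hfa hga
    simp [hfa, hga, mul_comm]
  rw [hinner, ← hf.norm_toLp_eq_sqrt_integral_sq, ← hg.norm_toLp_eq_sqrt_integral_sq]
  exact real_inner_le_norm _ _

theorem MeasureTheory.Lp.coeFn_smul_add_smul {p : ENNReal} (a b : ℝ) (f g : Lp ℝ p ν) :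
    ⇑(a • f + b • g) =ᵐ[ν] fun x => a * f x + b * g x := by
  filter_upwards [Lp.coeFn_add (a • f) (b • g), Lp.coeFn_smul a f, Lp.coeFn_smul b g]
    with x h hf hg
  rw [h, Pi.add_apply, hf, hg, Pi.smul_apply, Pi.smul_apply, smul_eq_mul, smul_eq_mul]

end

theorem mul_max_self_zero (a : ℝ) : a * max a 0 = max a 0 ^ 2 := by
  rcases le_total a 0 with h | h <;> simp [h, sq]

section
variable {μ}

theorem coeFn_constL2 (c : ℝ) : ⇑(constL2 μ c) =ᵐ[μ] fun _ => c :=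
  Lp.coeFn_const 2 μ c

theorem constL2_le_iff {Q : L2 μ} {c : ℝ} : constL2 μ c ≤ Q ↔ ∀ᵐ ω ∂μ, c ≤ Q ω := by
  rw [← Lp.coeFn_le]
  refine eventually_congr ?_
  filter_upwards [coeFn_constL2 (μ := μ) c] with ω hω
  rw [hω]

theorem integral_constL2 (c : ℝ) : ∫ ω, constL2 μ c ω ∂μ = c := by
  simp [integral_congr_ae (coeFn_constL2 c)]

theorem integral_eq_inner_constL2_one (Q : L2 μ) :
    ∫ ω, Q ω ∂μ = inner ℝ (constL2 μ 1) Q := by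
  rw [L2.inner_def]
  refine integral_congr_ae ?_
  filter_upwards [coeFn_constL2 (μ := μ) 1] with ω hω
  simp [hω]

theorem isClosed_densities : IsClosed (densities μ) := by
  have hint : Continuous fun Q : L2 μ => ∫ ω, Q ω ∂μ := by
    simp_rw [integral_eq_inner_constL2_one]
    exact continuous_const.inner continuous_id
  have hset : densities μ = {Q | 0 ≤ Q} ∩ {Q | ∫ ω, Q ω ∂μ = 1} := by
    ext Q
    simp [densities, Lp.coeFn_nonneg]
  rw [hset]
  exact isClosed_Ici.inter (isClosed_eq hint continuous_const)

theorem convex_densities : Convex ℝ (densities μ) := by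
  rintro Q₁ ⟨hQ₁, hint₁⟩ Q₂ ⟨hQ₂, hint₂⟩ a b ha hb hab
  have hcoe := Lp.coeFn_smul_add_smul a b Q₁ Q₂
  constructor
  · filter_upwards [hcoe, hQ₁, hQ₂] with ω h h₁ h₂
    simp only [Pi.zero_apply] at h₁ h₂ ⊢
    rw [h]
    positivity
  · rw [integral_congr_ae hcoe, integral_add ((Lp.memLp Q₁).integrable one_le_two |>.const_mul a)
      ((Lp.memLp Q₂).integrable one_le_two |>.const_mul b), integral_const_mul,
      integral_const_mul, hint₁, hint₂, mul_one, mul_one, hab]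

theorem le_integral_of_ae_le {Q : L2 μ} {a : ℝ} (h : ∀ᵐ ω ∂μ, a ≤ Q ω) :
    a ≤ ∫ ω, Q ω ∂μ := by
  simpa using integral_mono_ae (integrable_const a) ((Lp.memLp Q).integrable one_le_two) h

theorem le_essInfR {Q : L2 μ} {a : ℝ} (h : ∀ᵐ ω ∂μ, a ≤ Q ω) : a ≤ essInfR μ Q :=
  le_csSup ⟨_, fun _ => le_integral_of_ae_le⟩ h

theorem ae_essInfR_le {Q : L2 μ} {a : ℝ} (h : ∀ᵐ ω ∂μ, a ≤ Q ω) :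
    ∀ᵐ ω ∂μ, essInfR μ Q ≤ Q ω := by
  obtain ⟨u, -, hu, hu_mem⟩ := exists_seq_tendsto_sSup (α := ℝ) ⟨a, h⟩
    ⟨_, fun _ => le_integral_of_ae_le⟩
  filter_upwards [ae_all_iff.2 hu_mem] with ω hω
  exact le_of_tendsto hu (Eventually.of_forall hω)

theorem essInfR_mem_Icc {Q : L2 μ} (hQ : Q ∈ densities μ) : essInfR μ Q ∈ Set.Icc 0 1 :=
  ⟨le_essInfR hQ.1, hQ.2 ▸ le_integral_of_ae_le (ae_essInfR_le hQ.1)⟩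

theorem norm_sub_constL2 (Q : L2 μ) (c : ℝ) :
    ‖Q - constL2 μ c‖ = √(∫ ω, (Q ω - c) ^ 2 ∂μ) := by
  rw [L2.norm_eq_sqrt_integral_sq]
  congr 1
  refine integral_congr_ae ?_
  filter_upwards [Lp.coeFn_sub Q (constL2 μ c), coeFn_constL2 (μ := μ) c] with ω h hc
  rw [h, Pi.sub_apply, hc]

theorem norm_sub_constL2_essInfR_le {Q : L2 μ} {c : ℝ} (h : ∀ᵐ ω ∂μ, c ≤ Q ω) :
    ‖Q - constL2 μ (essInfR μ Q)‖ ≤ ‖Q - constL2 μ c‖ := by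
  have hint (d : ℝ) : Integrable (fun ω => (Q ω - d) ^ 2) μ :=
    ((Lp.memLp Q).sub (memLp_const d)).integrable_sq
  rw [norm_sub_constL2, norm_sub_constL2]
  refine Real.sqrt_le_sqrt (integral_mono_ae (hint _) (hint _) ?_)
  filter_upwards [ae_essInfR_le h] with ω hω
  have hc : c ≤ essInfR μ Q := le_essInfR h
  gcongr

theorem mem_meanDevEnvelope_iff {Q : L2 μ} {l : ℝ} :
    Q ∈ meanDevEnvelope μ l ↔
      Q ∈ densities μ ∧ ∃ c ∈ Set.Icc (0 : ℝ) 1, constL2 μ c ≤ Q ∧ ‖Q - constL2 μ c‖ ≤ l := by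
  simp only [meanDevEnvelope, Set.mem_ofPred_eq, ← norm_sub_constL2, constL2_le_iff]
  refine ⟨fun ⟨hQ, hdev⟩ => ⟨hQ, _, essInfR_mem_Icc hQ, ae_essInfR_le hQ.1, hdev⟩, ?_⟩
  rintro ⟨hQ, c, -, hc, hdev⟩
  exact ⟨hQ, (norm_sub_constL2_essInfR_le hc).trans hdev⟩

theorem convex_meanDevEnvelope (l : ℝ) : Convex ℝ (meanDevEnvelope μ l) := by
  intro Q₁ hQ₁ Q₂ hQ₂ a b ha hb hab
  obtain ⟨hd₁, c₁, hc₁, hle₁, hdev₁⟩ := mem_meanDevEnvelope_iff.1 hQ₁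
  obtain ⟨hd₂, c₂, hc₂, hle₂, hdev₂⟩ := mem_meanDevEnvelope_iff.1 hQ₂
  have hconst : constL2 μ (a * c₁ + b * c₂) = a • constL2 μ c₁ + b • constL2 μ c₂ := by
    change Lp.constL 2 μ ℝ (a * c₁ + b * c₂) = a • Lp.constL 2 μ ℝ c₁ + b • Lp.constL 2 μ ℝ c₂
    rw [map_add, ← smul_eq_mul, ← smul_eq_mul, map_smul, map_smul]
  refine mem_meanDevEnvelope_iff.2 ⟨convex_densities hd₁ hd₂ ha hb hab, a * c₁ + b * c₂,
    convex_Icc 0 1 hc₁ hc₂ ha hb hab, ?_, ?_⟩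
  · rw [constL2_le_iff] at hle₁ hle₂ ⊢
    filter_upwards [Lp.coeFn_smul_add_smul a b Q₁ Q₂, hle₁, hle₂] with ω h h₁ h₂
    rw [h]
    gcongr
  · have hdiff : a • Q₁ + b • Q₂ - constL2 μ (a * c₁ + b * c₂) =
        a • (Q₁ - constL2 μ c₁) + b • (Q₂ - constL2 μ c₂) := by
      rw [hconst, smul_sub, smul_sub]
      abel
    rw [hdiff, ← mem_closedBall_zero_iff]
    exact convex_closedBall 0 l (mem_closedBall_zero_iff.2 hdev₁)
      (mem_closedBall_zero_iff.2 hdev₂) ha hb hab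

theorem isClosed_meanDevEnvelope (l : ℝ) : IsClosed (meanDevEnvelope μ l) := by
  set S : Set (L2 μ × Set.Icc (0 : ℝ) 1) :=
    {p | p.1 ∈ densities μ ∧ constL2 μ p.2 ≤ p.1 ∧ ‖p.1 - constL2 μ p.2‖ ≤ l}
  have hconst : Continuous fun p : L2 μ × Set.Icc (0 : ℝ) 1 => constL2 μ p.2 :=
    (Lp.constL 2 μ ℝ).continuous.comp (continuous_subtype_val.comp continuous_snd)
  have hS : IsClosed S :=
    (isClosed_densities.preimage continuous_fst).inter ((isClosed_le hconst continuous_fst).inter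
      (isClosed_le (continuous_fst.sub hconst).norm continuous_const))
  have hproj : meanDevEnvelope μ l = Prod.fst '' S := by
    ext Q
    rw [mem_meanDevEnvelope_iff]
    constructor
    · rintro ⟨hQ, c, hc, hle, hdev⟩
      exact ⟨(Q, ⟨c, hc⟩), ⟨hQ, hle, hdev⟩, rfl⟩
    · rintro ⟨⟨Q, c, hc⟩, ⟨hQ, hle, hdev⟩, rfl⟩
      exact ⟨hQ, c, hc, hle, hdev⟩
  exact hproj ▸ isClosedMap_fst_of_compactSpace S hS

theorem integral_sub_mul_sub_eq (X : L2 μ) {Q : L2 μ} (hQ : ∫ ω, Q ω ∂μ = 1) (c : ℝ) :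
    ∫ ω, (X ω - ∫ ω', X ω' ∂μ) * (Q ω - c) ∂μ = pairing μ X Q - ∫ ω, X ω ∂μ := by
  set m := ∫ ω, X ω ∂μ
  have hX : Integrable X μ := (Lp.memLp X).integrable one_le_two
  have hQi : Integrable Q μ := (Lp.memLp Q).integrable one_le_two
  have hXQ : Integrable (fun ω => X ω * Q ω) μ := (Lp.memLp X).integrable_mul (Lp.memLp Q)
  simp_rw [sub_mul, mul_sub]
  rw [integral_sub, integral_sub hXQ (hX.mul_const c),
    integral_sub (hQi.const_mul m) (integrable_const _), integral_mul_const, integral_const_mul,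
    hQ, pairing]
  · simp only [mul_one, integral_const, probReal_univ, smul_eq_mul, one_mul]
    ring
  · exact hXQ.sub (hX.mul_const c)
  · exact (hQi.const_mul m).sub (integrable_const _)

theorem pairing_le_meanDev {l : ℝ} {Q : L2 μ} (hQ : Q ∈ meanDevEnvelope μ l) (X : L2 μ) :
    pairing μ X Q ≤ meanDev μ l X := by
  obtain ⟨hQd, c, -, hcQ, hdev⟩ := mem_meanDevEnvelope_iff.1 hQ
  rw [constL2_le_iff] at hcQ
  set m := ∫ ω, X ω ∂μ
  have hXm : MemLp (fun ω => X ω - m) 2 μ := (Lp.memLp X).sub (memLp_const m)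
  have hQc : MemLp (fun ω => Q ω - c) 2 μ := (Lp.memLp Q).sub (memLp_const c)
  calc pairing μ X Q = m + ∫ ω, (X ω - m) * (Q ω - c) ∂μ := by
        rw [integral_sub_mul_sub_eq X hQd.2]
        ring
    _ ≤ m + ∫ ω, max (X ω - m) 0 * (Q ω - c) ∂μ := by
        gcongr m + ?_
        refine integral_mono_ae (hXm.integrable_mul hQc) (hXm.pos_part.integrable_mul hQc) ?_
        filter_upwards [hcQ] with ω hω
        exact mul_le_mul_of_nonneg_right (le_max_left _ _) (sub_nonneg.2 hω)
    _ ≤ m + √(∫ ω, max (X ω - m) 0 ^ 2 ∂μ) * ‖Q - constL2 μ c‖ := by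
        rw [norm_sub_constL2]
        gcongr
        exact hXm.pos_part.integral_mul_le_sqrt_mul_sqrt hQc
    _ ≤ meanDev μ l X := by
        rw [meanDev, mul_comm l]
        gcongr

theorem exists_mem_meanDevEnvelope_pairing_eq {l : ℝ} (h0 : 0 ≤ l) (h1 : l ≤ 1) (X : L2 μ) :
    ∃ Q ∈ meanDevEnvelope μ l, pairing μ X Q = meanDev μ l X := by
  set m := ∫ ω, X ω ∂μ
  have hYm : MemLp (fun ω => max (X ω - m) 0) 2 μ := ((Lp.memLp X).sub (memLp_const m)).pos_part
  set Y : L2 μ := hYm.toLp _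
  set s := ‖Y‖
  have hs : s = √(∫ ω, max (X ω - m) 0 ^ 2 ∂μ) := hYm.norm_toLp_eq_sqrt_integral_sq
  -- if `Y = 0` then `r = l / 0 = 0` and `Q` below is the constant `1`; no case split is needed
  set r := l / s
  have hr : 0 ≤ r := div_nonneg h0 (norm_nonneg _)
  have hrs : r * s ≤ l := by
    rcases eq_or_ne s 0 with hs0 | hs0
    · simp [hs0, h0]
    · rw [div_mul_cancel₀ l hs0]
  have hEY : ∫ ω, max (X ω - m) 0 ∂μ ≤ s := by
    simpa [hs] using hYm.integral_mul_le_sqrt_mul_sqrt (memLp_const (1 : ℝ))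
  set c := 1 - r * ∫ ω, max (X ω - m) 0 ∂μ
  have hc : c ∈ Set.Icc (0 : ℝ) 1 := by
    have hEY0 : 0 ≤ ∫ ω, max (X ω - m) 0 ∂μ := integral_nonneg fun ω => le_max_right _ _
    constructor <;> nlinarith [mul_le_mul_of_nonneg_left hEY hr]
  set Q : L2 μ := constL2 μ c + r • Y
  have hQ : ⇑Q =ᵐ[μ] fun ω => c + r * max (X ω - m) 0 := by
    filter_upwards [Lp.coeFn_add (constL2 μ c) (r • Y), Lp.coeFn_smul r Y, coeFn_constL2 c,
      hYm.coeFn_toLp] with ω h hsmul hconst hY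
    rw [h, Pi.add_apply, hsmul, Pi.smul_apply, hconst, hY, smul_eq_mul]
  have hQc : ∀ᵐ ω ∂μ, c ≤ Q ω := by
    filter_upwards [hQ] with ω hω
    rw [hω]
    have := mul_nonneg hr (le_max_right (X ω - m) 0)
    linarith
  have hQint : ∫ ω, Q ω ∂μ = 1 := by
    rw [integral_congr_ae hQ, integral_add (integrable_const c)
      ((hYm.integrable one_le_two).const_mul r), integral_const_mul]
    simp [c]
  have hQd : Q ∈ densities μ := ⟨hQc.mono fun ω hω => hc.1.trans hω, hQint⟩
  refine ⟨Q, mem_meanDevEnvelope_iff.2 ⟨hQd, c, hc, constL2_le_iff.2 hQc, ?_⟩, ?_⟩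
  · rwa [add_sub_cancel_left, norm_smul, Real.norm_of_nonneg hr]
  · calc pairing μ X Q = m + ∫ ω, (X ω - m) * (Q ω - c) ∂μ := by
          rw [integral_sub_mul_sub_eq X hQint]
          ring
      _ = m + r * ∫ ω, max (X ω - m) 0 ^ 2 ∂μ := by
          rw [← integral_const_mul]
          congr 1
          refine integral_congr_ae ?_
          filter_upwards [hQ] with ω hω
          rw [hω, add_sub_cancel_left, mul_left_comm, mul_max_self_zero]
      _ = meanDev μ l X := by
          rw [meanDev, ← hs, ← Real.sq_sqrt (integral_nonneg fun ω => sq_nonneg _), ← hs, sq,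
            div_mul_eq_mul_div, mul_div_assoc, mul_self_div_self]

theorem constL2_one_mem_meanDevEnvelope {l : ℝ} (h0 : 0 ≤ l) :
    constL2 μ 1 ∈ meanDevEnvelope μ l := by
  have hd : constL2 μ 1 ∈ densities μ :=
    ⟨(coeFn_constL2 1).mono fun ω hω => by simp [hω], integral_constL2 1⟩
  exact mem_meanDevEnvelope_iff.2 ⟨hd, 1, ⟨zero_le_one, le_rfl⟩, le_rfl, by simpa using h0⟩

theorem isGreatest_pairing_meanDevEnvelope {l : ℝ} (h0 : 0 ≤ l) (h1 : l ≤ 1) (X : L2 μ) :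
    IsGreatest {e : ℝ | ∃ Q ∈ meanDevEnvelope μ l, e = pairing μ X Q} (meanDev μ l X) := by
  obtain ⟨Q, hQ, hXQ⟩ := exists_mem_meanDevEnvelope_pairing_eq h0 h1 X
  refine ⟨⟨Q, hQ, hXQ.symm⟩, ?_⟩
  rintro e ⟨Q', hQ', rfl⟩
  exact pairing_le_meanDev hQ' X

end

/-- for `0 ≤ λ ≤ 1` and every `X ∈ L²`,
`sup{E[XQ] : Q ≥ 0 a.s., E[Q] = 1, ‖Q − ess inf Q‖₂ ≤ λ} = E[X] + λ‖(X − E[X])₊‖₂`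
(the supremum is attained in the sense of `IsLUB`), and the set
`𝒬 = {Q ∈ 𝒫 : ‖Q − ess inf Q‖₂ ≤ λ}` is nonempty, convex and closed in `L²`, so that `𝒬`
is the risk envelope of the mean-deviation risk measure. -/
theorem stmt_11 (l : ℝ) (h0 : 0 ≤ l) (h1 : l ≤ 1) :
    (∀ X : L2 μ,
      IsLUB {e : ℝ | ∃ Q ∈ meanDevEnvelope μ l, e = pairing μ X Q} (meanDev μ l X)) ∧
    (meanDevEnvelope μ l).Nonempty ∧ Convex ℝ (meanDevEnvelope μ l) ∧
    IsClosed (meanDevEnvelope μ l) :=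
  ⟨fun X => (isGreatest_pairing_meanDevEnvelope h0 h1 X).isLUB,
    ⟨_, constL2_one_mem_meanDevEnvelope h0⟩, convex_meanDevEnvelope l, isClosed_meanDevEnvelope l⟩
end
end
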